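/- Let E = E(n,𝒟) be a fractal cube whose 1st approximation E₁ contains an island U = ⋃_{j∈J} φ_j([0,1]^d) (J ⊆ {1,…,N}), and let P be the set of points of E admitting a coding in which letters from J occur infinitely often. Then E \ P is contained in ⋃_{σ ∈ Σ*} φ_σ(E'), where E' is the fractal cube with digit set 𝒟' = 𝒟 \ {d_j : j ∈ J}; consequently dim_H (E \ P) ≤ log(#𝒟')/log n < dim_H E. -/

import Mathlib

/-!
A point of `E` outside `P` has a coding whose letters eventually avoid `J`. From that stage on
only maps preserving `E'` are applied, so the point lies in `φ_w(E')` for the corresponding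
prefix `w`; hence `E \ P` is a countable union of similar copies of `E'`, and covering `E'` by
its cylinders of level `k` gives `dim_H E' ≤ log #𝒟' / log n`.

For the strict inequality, `dim_H E ≥ log N / log n` by the mass distribution principle applied
to the push-forward of the uniform Bernoulli measure under the coding map: the digits are
distinct integers, so a ball of radius `ρ ∈ (n^{-k-1}, n^{-k}]` meets at most `4^d` cylinders of
level `k`, each of mass `N^{-k}`.
-/

open Set

/-- The unit cube `[0,1]^d`. -/
def unitCube (d : ℕ) : Set (Fin d → ℝ) := {x | ∀ j, x j ∈ Icc (0:ℝ) 1}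

open Metric MeasureTheory Filter Topology
open scoped NNReal ENNReal Finset

section Words

variable {ι X : Type*}

def wordMap (φ : ι → X → X) (w : List ι) : X → X := w.foldr (fun j f => φ j ∘ f) id

@[simp] lemma wordMap_nil (φ : ι → X → X) : wordMap φ [] = id := rfl

@[simp] lemma wordMap_cons (φ : ι → X → X) (j : ι) (w : List ι) :
    wordMap φ (j :: w) = φ j ∘ wordMap φ w := rfl

lemma wordMap_append (φ : ι → X → X) (w w' : List ι) :
    wordMap φ (w ++ w') = wordMap φ w ∘ wordMap φ w' := by
  induction w with
  | nil => rfl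
  | cons j w ih => simp [ih, Function.comp_assoc]

lemma mapsTo_wordMap {φ : ι → X → X} {S : Set X} {w : List ι}
    (h : ∀ j ∈ w, MapsTo (φ j) S S) : MapsTo (wordMap φ w) S S := by
  induction w with
  | nil => exact mapsTo_id S
  | cons j w ih =>
    simp only [List.mem_cons, forall_eq_or_imp] at h
    exact h.1.comp (ih h.2)

def prefixWord (ω : ℕ → ι) (k : ℕ) : List ι := List.ofFn fun i : Fin k => ω i

@[simp] lemma length_prefixWord (ω : ℕ → ι) (k : ℕ) : (prefixWord ω k).length = k :=
  List.length_ofFn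

lemma mem_prefixWord {ω : ℕ → ι} {k : ℕ} {j : ι} : j ∈ prefixWord ω k ↔ ∃ i < k, ω i = j := by
  simp [prefixWord, List.mem_ofFn, Fin.exists_iff]

lemma prefixWord_add (ω : ℕ → ι) (m k : ℕ) :
    prefixWord ω (m + k) = prefixWord ω m ++ prefixWord (fun i => ω (m + i)) k :=
  List.ofFn_add

lemma prefixWord_succ (ω : ℕ → ι) (k : ℕ) : prefixWord ω (k + 1) = prefixWord ω k ++ [ω k] :=
  prefixWord_add ω k 1

def prefixCylinder (k : ℕ) (v : Fin k → ι) : Set (ℕ → ι) := {ω | ∀ i : Fin k, ω i = v i}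

lemma wordMap_prefixWord_mem_image {φ : ι → X → X} {S : Set X} {ω : ℕ → ι} {k l : ℕ}
    (hkl : k ≤ l) (hS : ∀ i ≥ k, MapsTo (φ (ω i)) S S) {y : X} (hy : y ∈ S) :
    wordMap φ (prefixWord ω l) y ∈ wordMap φ (prefixWord ω k) '' S := by
  obtain ⟨m, rfl⟩ := Nat.exists_eq_add_of_le hkl
  rw [prefixWord_add, wordMap_append]
  refine mem_image_of_mem _ (mapsTo_wordMap (fun j hj => ?_) hy)
  obtain ⟨i, -, rfl⟩ := mem_prefixWord.1 hj
  exact hS _ (Nat.le_add_right k i)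

lemma exists_coding {φ : ι → X → X} {E : Set X} (hE : E ⊆ ⋃ j, φ j '' E) {x : X} (hx : x ∈ E) :
    ∃ ω : ℕ → ι, ∀ k, x ∈ wordMap φ (prefixWord ω k) '' E := by
  have hstep : ∀ y : E, ∃ p : ι × E, φ p.1 p.2 = y := fun ⟨y, hy⟩ => by
    obtain ⟨j, z, hz, rfl⟩ := mem_iUnion.1 (hE hy)
    exact ⟨(j, ⟨z, hz⟩), rfl⟩
  choose next hnext using hstep
  let pts : ℕ → E := fun k => (fun y => (next y).2)^[k] ⟨x, hx⟩
  refine ⟨fun k => (next (pts k)).1, fun k => ⟨pts k, (pts k).2, ?_⟩⟩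
  induction k with
  | zero => rfl
  | succ k ih =>
    rw [prefixWord_succ, wordMap_append, Function.comp_apply, ← ih]
    simp only [wordMap_cons, wordMap_nil, Function.comp_apply, id, pts,
      Function.iterate_succ_apply']
    exact congrArg _ (hnext _)

lemma subset_iUnion_wordMap_image {φ : ι → X → X} {S : Set X} {F : Finset ι}
    (hS : S ⊆ ⋃ j ∈ F, φ j '' S) (k : ℕ) :
    S ⊆ ⋃ v : Fin k → F, wordMap φ (List.ofFn fun i => (v i : ι)) '' S := by
  induction k with
  | zero => exact fun x hx => mem_iUnion.2 ⟨Fin.elim0, x, hx, rfl⟩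
  | succ k ih =>
    intro x hx
    obtain ⟨j, hj, y, hy, rfl⟩ := mem_iUnion₂.1 (hS hx)
    obtain ⟨v, z, hz, rfl⟩ := mem_iUnion.1 (ih hy)
    exact mem_iUnion.2 ⟨Fin.cons ⟨j, hj⟩ v, z, hz, by simp [List.ofFn_succ]⟩

end Words

section Contraction

variable {ι X : Type*} [MetricSpace X] {φ : ι → X → X} {r : ℝ≥0}

lemma lipschitzWith_wordMap (hφ : ∀ j, LipschitzWith r (φ j)) (w : List ι) :
    LipschitzWith (r ^ w.length) (wordMap φ w) := by
  induction w with
  | nil => simpa using LipschitzWith.id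
  | cons j w ih => simpa [pow_succ'] using (hφ j).comp ih

lemma dist_le_of_mem_wordMap_image (hφ : ∀ j, LipschitzWith r (φ j)) {S : Set X}
    (hS : Bornology.IsBounded S) {w : List ι} {x y : X} (hx : x ∈ wordMap φ w '' S)
    (hy : y ∈ wordMap φ w '' S) : dist x y ≤ r ^ w.length * diam S := by
  have hL := lipschitzWith_wordMap hφ w
  calc dist x y ≤ diam (wordMap φ w '' S) := dist_le_diam_of_mem (hL.isBounded_image hS) hx hy
    _ ≤ _ := by simpa using hL.diam_image_le S hS

lemma tendsto_of_mem_wordMap_image (hφ : ∀ j, LipschitzWith r (φ j)) (hr : r < 1) {S : Set X}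
    (hS : Bornology.IsBounded S) {w : ℕ → List ι}
    (hw : Tendsto (fun k => (w k).length) atTop atTop) {x : X} {z : ℕ → X}
    (hx : ∀ k, x ∈ wordMap φ (w k) '' S) (hz : ∀ k, z k ∈ wordMap φ (w k) '' S) :
    Tendsto z atTop (𝓝 x) := by
  have hlim : Tendsto (fun k => (r : ℝ) ^ (w k).length * diam S) atTop (𝓝 0) := by
    simpa using ((tendsto_pow_atTop_nhds_zero_of_lt_one r.coe_nonneg hr).comp hw).mul_const (diam S)
  exact tendsto_iff_dist_tendsto_zero.2 <| squeeze_zero (fun _ => dist_nonneg)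
    (fun k => dist_le_of_mem_wordMap_image hφ hS (hz k) (hx k)) hlim

lemma iInter_wordMap_image_eq_singleton (hφ : ∀ j, LipschitzWith r (φ j)) (hr : r < 1)
    {S : Set X} (hS : Bornology.IsBounded S) {ω : ℕ → ι} {x : X}
    (hx : ∀ k, x ∈ wordMap φ (prefixWord ω k) '' S) :
    ⋂ k, wordMap φ (prefixWord ω k) '' S = {x} := by
  refine eq_singleton_iff_unique_mem.2 ⟨mem_iInter.2 hx, fun y hy => ?_⟩
  have := tendsto_of_mem_wordMap_image hφ hr hS
    (by simp only [length_prefixWord]; exact tendsto_id) hx (z := fun _ => y) (mem_iInter.1 hy)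
  exact tendsto_nhds_unique tendsto_const_nhds this

lemma mem_wordMap_image_of_forall_ge_mapsTo (hφ : ∀ j, LipschitzWith r (φ j)) (hr : r < 1)
    {E K : Set X} (hE : Bornology.IsBounded E) (hK : IsCompact K) (hKne : K.Nonempty)
    {ω : ℕ → ι} {m : ℕ} (hω : ∀ k ≥ m, MapsTo (φ (ω k)) K K) {x : X}
    (hx : ∀ k, x ∈ wordMap φ (prefixWord ω k) '' E) :
    x ∈ wordMap φ (prefixWord ω m) '' K := by
  obtain ⟨y, hy⟩ := hKne
  have hz := fun k => wordMap_prefixWord_mem_image (l := m + k) (Nat.le_add_right m k) hω hy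
  have hlim : Tendsto (fun k => wordMap φ (prefixWord ω (m + k)) y) atTop (𝓝 x) :=
    tendsto_of_mem_wordMap_image hφ hr (hE.union hK.isBounded)
      (by simpa using tendsto_atTop_mono (Nat.le_add_left · m) tendsto_id)
      (fun k => image_mono subset_union_left (hx (m + k)))
      (fun k => mem_image_of_mem _ (subset_union_right hy))
  exact ((hK.image (lipschitzWith_wordMap hφ _).continuous).isClosed).mem_of_tendsto hlim
    (Eventually.of_forall hz)

lemma subset_of_forall_mapsTo (hφ : ∀ j, LipschitzWith r (φ j)) (hr : r < 1) {E K : Set X}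
    (hE : E ⊆ ⋃ j, φ j '' E) (hEb : Bornology.IsBounded E) (hK : IsCompact K)
    (hKne : K.Nonempty) (hKφ : ∀ j, MapsTo (φ j) K K) : E ⊆ K := by
  intro x hx
  obtain ⟨ω, hω⟩ := exists_coding hE hx
  simpa [prefixWord] using
    mem_wordMap_image_of_forall_ge_mapsTo hφ hr hEb hK hKne (m := 0) (fun k _ => hKφ _) hω

lemma mem_iUnion_wordMap_image_of_eventually_notMem (hφ : ∀ j, LipschitzWith r (φ j))
    (hr : r < 1) {E K : Set X} (hE : E ⊆ ⋃ j, φ j '' E) (hEb : Bornology.IsBounded E)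
    (hK : IsCompact K) (hKne : K.Nonempty) {J : Set ι} (hKφ : ∀ j ∉ J, MapsTo (φ j) K K)
    {x : X} (hx : x ∈ E)
    (hcoding : ∀ ω : ℕ → ι, ⋂ k, wordMap φ (prefixWord ω k) '' E = {x} → ∃ m, ∀ k ≥ m, ω k ∉ J) :
    x ∈ ⋃ w, wordMap φ w '' K := by
  obtain ⟨ω, hω⟩ := exists_coding hE hx
  obtain ⟨m, hm⟩ := hcoding ω (iInter_wordMap_image_eq_singleton hφ hr hEb hω)
  exact mem_iUnion.2 ⟨_, mem_wordMap_image_of_forall_ge_mapsTo hφ hr hEb hK hKne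
    (fun k hk => hKφ _ (hm k hk)) hω⟩

end Contraction

section UpperBound

variable {ι X : Type*} [MetricSpace X] [MeasurableSpace X] [BorelSpace X] {φ : ι → X → X}
  {r : ℝ≥0}

lemma hausdorffMeasure_eq_zero_of_card_mul_rpow_lt_one (hφ : ∀ j, LipschitzWith r (φ j))
    (hr : r < 1) {S : Set X} (hSb : Bornology.IsBounded S) {F : Finset ι}
    (hS : S ⊆ ⋃ j ∈ F, φ j '' S) {s : ℝ} (hs : 0 ≤ s) (hF : F.card * (r : ℝ) ^ s < 1) :
    μH[s] S = 0 := by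
  set t : ∀ k, (Fin k → F) → Set X := fun k v => wordMap φ (List.ofFn fun i => (v i : ι)) '' S
  set ρ : ℕ → ℝ := fun k => (r : ℝ) ^ k * diam S
  have hρ : Tendsto ρ atTop (𝓝 0) := by
    simpa using (tendsto_pow_atTop_nhds_zero_of_lt_one r.coe_nonneg hr).mul_const (diam S)
  have hdiam : ∀ k v, ediam (t k v) ≤ ENNReal.ofReal (ρ k) := fun k v =>
    ediam_le_of_forall_dist_le fun x hx y hy => by
      simpa [ρ] using dist_le_of_mem_wordMap_image hφ hSb hx hy
  have hsum : ∀ k, ∑ v, ediam (t k v) ^ s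
      ≤ ENNReal.ofReal (diam S ^ s * (F.card * (r : ℝ) ^ s) ^ k) := fun k => calc
    ∑ v, ediam (t k v) ^ s ≤ ∑ _v : Fin k → F, ENNReal.ofReal (ρ k) ^ s :=
      Finset.sum_le_sum fun v _ => ENNReal.rpow_le_rpow (hdiam k v) hs
    _ = ENNReal.ofReal (diam S ^ s * (F.card * (r : ℝ) ^ s) ^ k) := by
      rw [Finset.sum_const, Finset.card_univ, nsmul_eq_mul,
        ENNReal.ofReal_rpow_of_nonneg (by positivity) hs, ← ENNReal.ofReal_natCast,
        ← ENNReal.ofReal_mul (by positivity)]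
      simp only [ρ, Fintype.card_fun, Fintype.card_fin, Fintype.card_coe, Nat.cast_pow,
        Real.mul_rpow (by positivity : (0 : ℝ) ≤ r ^ k) diam_nonneg, mul_pow]
      rw [← Real.rpow_pow_comm r.coe_nonneg]
      ring_nf
  have hlim : Tendsto (fun k => ENNReal.ofReal (diam S ^ s * (F.card * (r : ℝ) ^ s) ^ k))
      atTop (𝓝 0) := by
    simpa using ENNReal.tendsto_ofReal
      ((tendsto_pow_atTop_nhds_zero_of_lt_one (by positivity) hF).const_mul (diam S ^ s))
  refine le_antisymm ?_ zero_le
  calc μH[s] S ≤ liminf (fun k => ∑ v, ediam (t k v) ^ s) atTop :=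
        Measure.hausdorffMeasure_le_liminf_sum s S _ (by simpa using ENNReal.tendsto_ofReal hρ)
          t (Eventually.of_forall hdiam) (Eventually.of_forall (subset_iUnion_wordMap_image hS))
    _ ≤ liminf (fun k => ENNReal.ofReal (diam S ^ s * (F.card * (r : ℝ) ^ s) ^ k)) atTop :=
        liminf_le_liminf (Eventually.of_forall hsum)
    _ = 0 := hlim.liminf_eq

lemma dimH_le_of_contraction (hφ : ∀ j, LipschitzWith r (φ j)) (hr0 : 0 < r) (hr : r < 1)
    {S : Set X} (hSb : Bornology.IsBounded S) {F : Finset ι} (hS : S ⊆ ⋃ j ∈ F, φ j '' S) :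
    dimH S ≤ ENNReal.ofReal (Real.log F.card / -Real.log r) := by
  have hlogr : 0 < -Real.log r := neg_pos.2 (Real.log_neg hr0 hr)
  refine dimH_le fun s hs => le_of_not_gt fun hlt => ?_
  rw [← ENNReal.ofReal_coe_nnreal, ENNReal.ofReal_lt_ofReal_iff_of_nonneg (by positivity)] at hlt
  refine ENNReal.zero_ne_top <| hs ▸ (hausdorffMeasure_eq_zero_of_card_mul_rpow_lt_one hφ hr hSb
    hS s.2 ?_).symm
  rcases F.eq_empty_or_nonempty with rfl | hF
  · simp
  have hcard : (0 : ℝ) < F.card := by exact_mod_cast hF.card_pos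
  rw [div_lt_iff₀ hlogr] at hlt
  calc (F.card : ℝ) * (r : ℝ) ^ (s : ℝ) = Real.exp (Real.log F.card + s * Real.log r) := by
        rw [Real.rpow_def_of_pos (NNReal.coe_pos.2 hr0), Real.exp_add, Real.exp_log hcard,
          mul_comm (s : ℝ)]
    _ < 1 := Real.exp_lt_one_iff.2 (by linarith)

lemma dimH_iUnion_wordMap_image_le [Countable ι] (hφ : ∀ j, LipschitzWith r (φ j)) (hr0 : 0 < r)
    (hr : r < 1) {S : Set X} (hSb : Bornology.IsBounded S) {F : Finset ι}
    (hS : S ⊆ ⋃ j ∈ F, φ j '' S) :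
    dimH (⋃ w, wordMap φ w '' S) ≤ ENNReal.ofReal (Real.log F.card / -Real.log r) := by
  rw [dimH_iUnion]
  exact iSup_le fun w => ((lipschitzWith_wordMap hφ w).dimH_image_le S).trans
    (dimH_le_of_contraction hφ hr0 hr hSb hS)

end UpperBound

section MassDistribution

variable {X : Type*} [MetricSpace X] [MeasurableSpace X] [BorelSpace X]

lemma le_dimH_of_measure_closedBall_le {μ : Measure X} {s : ℝ} (hs : 0 ≤ s) {C : ℝ≥0}
    (hball : ∀ x (ρ : ℝ), 0 < ρ → ρ ≤ 1 → μ (closedBall x ρ) ≤ C * ENNReal.ofReal (ρ ^ s))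
    {A : Set X} (hA : μ A ≠ 0) : ENNReal.ofReal s ≤ dimH A := by
  have hset : ∀ t : Set X, ediam t ≤ 2⁻¹ → μ t ≤ C * ediam t ^ s := by
    intro t ht
    rcases t.eq_empty_or_nonempty with rfl | ⟨a, ha⟩
    · simp
    have hne : ediam t ≠ ⊤ := ne_top_of_le_ne_top (by simp) ht
    have hδ : (ediam t).toReal < 1 := by
      have := ENNReal.toReal_mono (by simp) ht
      norm_num at this
      linarith
    -- `t` lies in every closed ball of radius `ρ > diam t` around `a`; let `ρ ↓ diam t`
    have hev : ∀ᶠ ρ in 𝓝[>] (ediam t).toReal, μ t ≤ C * ENNReal.ofReal (ρ ^ s) := by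
      filter_upwards [Ioo_mem_nhdsGT hδ] with ρ hρ
      refine (measure_mono fun y hy => mem_closedBall.2 ?_).trans
        (hball a ρ (ENNReal.toReal_nonneg.trans_lt hρ.1) hρ.2.le)
      exact (dist_le_diam_of_mem (isBounded_iff_ediam_ne_top.2 hne) hy ha).trans hρ.1.le
    have hlim : Tendsto (fun ρ : ℝ => (C : ℝ≥0∞) * ENNReal.ofReal (ρ ^ s))
        (𝓝[>] (ediam t).toReal) (𝓝 (C * ENNReal.ofReal ((ediam t).toReal ^ s))) :=
      ENNReal.Tendsto.const_mul (ENNReal.tendsto_ofReal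
        ((Real.continuousAt_rpow_const _ s (Or.inr hs)).tendsto.mono_left nhdsWithin_le_nhds))
        (Or.inr ENNReal.coe_ne_top)
    rw [← ENNReal.ofReal_toReal hne, ENNReal.ofReal_rpow_of_nonneg ENNReal.toReal_nonneg hs]
    exact ge_of_tendsto hlim hev
  have hle : (C : ℝ≥0∞)⁻¹ • μ ≤ μH[s] := Measure.le_hausdorffMeasure s _ 2⁻¹ (by simp)
    fun t ht => by
      rw [Measure.smul_apply, smul_eq_mul, mul_comm, ← div_eq_mul_inv]
      exact ENNReal.div_le_of_le_mul' (hset t ht)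
  have hA' : μH[(s.toNNReal : ℝ)] A ≠ 0 := by
    rw [Real.coe_toNNReal s hs]
    refine fun h => hA ?_
    have := (Measure.le_iff'.1 hle A).trans h.le
    simpa [ENNReal.coe_ne_top] using this
  exact le_dimH_of_hausdorffMeasure_ne_zero hA'

end MassDistribution

section CodingMap

variable {ι X : Type*} [MetricSpace X] [CompleteSpace X] {φ : ι → X → X} {r : ℝ≥0}

/-- A junk value unless the `φ j` are contractions preserving a bounded set containing `x₀`. -/
noncomputable def codingMap (φ : ι → X → X) (x₀ : X) (ω : ℕ → ι) : X :=
  haveI : Nonempty X := ⟨x₀⟩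
  limUnder atTop fun k => wordMap φ (prefixWord ω k) x₀

lemma tendsto_codingMap (hφ : ∀ j, LipschitzWith r (φ j)) (hr : r < 1) {E : Set X}
    (hEb : Bornology.IsBounded E) (hEφ : ∀ j, MapsTo (φ j) E E) {x₀ : X} (hx₀ : x₀ ∈ E)
    (ω : ℕ → ι) :
    Tendsto (fun k => wordMap φ (prefixWord ω k) x₀) atTop (𝓝 (codingMap φ x₀ ω)) := by
  have : Nonempty X := ⟨x₀⟩
  refine CauchySeq.tendsto_limUnder <| cauchySeq_of_le_tendsto_0
    (s := fun k => wordMap φ (prefixWord ω k) x₀) (fun k => (r : ℝ) ^ k * diam E)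
    (fun a b k ha hb => ?_) ?_
  · simpa using dist_le_of_mem_wordMap_image hφ hEb
      (wordMap_prefixWord_mem_image ha (fun _ _ => hEφ _) hx₀)
      (wordMap_prefixWord_mem_image hb (fun _ _ => hEφ _) hx₀)
  · simpa using (tendsto_pow_atTop_nhds_zero_of_lt_one r.coe_nonneg hr).mul_const (diam E)

lemma codingMap_mem (hφ : ∀ j, LipschitzWith r (φ j)) (hr : r < 1) {E : Set X}
    (hE : IsCompact E) (hEφ : ∀ j, MapsTo (φ j) E E) {x₀ : X} (hx₀ : x₀ ∈ E) (ω : ℕ → ι)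
    (k : ℕ) : codingMap φ x₀ ω ∈ wordMap φ (prefixWord ω k) '' E :=
  (hE.image (lipschitzWith_wordMap hφ _).continuous).isClosed.mem_of_tendsto
    (tendsto_codingMap hφ hr hE.isBounded hEφ hx₀ ω)
    ((eventually_ge_atTop k).mono fun _ hl =>
      wordMap_prefixWord_mem_image hl (fun _ _ => hEφ _) hx₀)

lemma measurable_codingMap [MeasurableSpace X] [BorelSpace X] [MeasurableSpace ι] [Countable ι]
    [MeasurableSingletonClass ι] (hφ : ∀ j, LipschitzWith r (φ j)) (hr : r < 1) {E : Set X}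
    (hEb : Bornology.IsBounded E) (hEφ : ∀ j, MapsTo (φ j) E E) {x₀ : X} (hx₀ : x₀ ∈ E) :
    Measurable (codingMap φ x₀) := by
  refine measurable_of_tendsto_metrizable (f := fun k ω => wordMap φ (prefixWord ω k) x₀)
    (fun k => ?_) (tendsto_pi_nhds.2 (tendsto_codingMap hφ hr hEb hEφ hx₀))
  exact (measurable_of_countable fun v : Fin k → ι => wordMap φ (List.ofFn v) x₀).comp
    (measurable_pi_lambda _ fun i => measurable_pi_apply _)

end CodingMap

section UniformBernoulli

variable (ι : Type*) [Fintype ι] [Nonempty ι] [MeasurableSpace ι] [MeasurableSingletonClass ι]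

noncomputable def uniformBernoulli : Measure (ℕ → ι) :=
  Measure.infinitePi fun _ => (PMF.uniformOfFintype ι).toMeasure

instance : IsProbabilityMeasure (uniformBernoulli ι) := by
  unfold uniformBernoulli; infer_instance

variable {ι}

lemma uniformBernoulli_prefixCylinder (k : ℕ) (v : Fin k → ι) :
    uniformBernoulli ι (prefixCylinder k v) = (Fintype.card ι : ℝ≥0∞)⁻¹ ^ k := by
  have hpi : prefixCylinder k v
      = (Finset.range k : Set ℕ).pi fun i => {a | ∀ h : i < k, a = v ⟨i, h⟩} := by
    ext ω
    simp [prefixCylinder, Fin.forall_iff]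
  rw [hpi, uniformBernoulli, Measure.infinitePi_pi _ fun i _ => (Set.toFinite _).measurableSet]
  rw [Finset.prod_congr rfl (g := fun _ => (Fintype.card ι : ℝ≥0∞)⁻¹), Finset.prod_const,
    Finset.card_range]
  intro i hi
  have : {a | ∀ h : i < k, a = v ⟨i, h⟩} = {v ⟨i, Finset.mem_range.1 hi⟩} := by
    ext a
    simp [Finset.mem_range.1 hi]
  rw [this, PMF.toMeasure_apply_singleton _ _ (measurableSet_singleton _),
    PMF.uniformOfFintype_apply]

end UniformBernoulli

section FractalCube

variable {d n : ℕ} {ι : Type*}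

lemma lipschitzWith_inv_smul_add {V : Type*} [SeminormedAddCommGroup V] [NormedSpace ℝ V]
    {f : V → V} (a : V) (hf : ∀ x, f x = (n : ℝ)⁻¹ • (x + a)) :
    LipschitzWith (n : ℝ≥0)⁻¹ f :=
  LipschitzWith.of_dist_le_mul fun x y => by simp [hf, dist_smul₀]

lemma natCast_rpow_log_div_log {N : ℕ} (hn : 1 < n) (hN : 0 < N) :
    (n : ℝ) ^ (Real.log N / Real.log n) = N := by
  rw [Real.rpow_def_of_pos (by positivity),
    mul_div_cancel₀ _ (Real.log_pos (by exact_mod_cast hn)).ne', Real.exp_log (by positivity)]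

lemma ofReal_log_div_log_lt {a b : ℕ} (hn : 1 < n) (ha : 0 < a) (hab : a < b) :
    ENNReal.ofReal (Real.log a / Real.log n) < ENNReal.ofReal (Real.log b / Real.log n) := by
  have hlogn : 0 < Real.log n := Real.log_pos (by exact_mod_cast hn)
  have hab' : (a : ℝ) < b := by exact_mod_cast hab
  rw [ENNReal.ofReal_lt_ofReal_iff
    (div_pos (Real.log_pos (by exact_mod_cast (Nat.succ_le_of_lt ha).trans_lt hab)) hlogn)]
  exact div_lt_div_of_pos_right (Real.log_lt_log (by exact_mod_cast ha) hab') hlogn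

/-- The last letter of `w` is the least significant digit. -/
def cubeAddress (n : ℕ) (M : ι → Fin d → ℕ) (w : List ι) (i : Fin d) : ℕ :=
  Nat.ofDigits n (w.map fun j => M j i).reverse

variable {M : ι → Fin d → ℕ} {φ : ι → (Fin d → ℝ) → (Fin d → ℝ)}

lemma cubeAddress_cons (j : ι) (w : List ι) (i : Fin d) :
    cubeAddress n M (j :: w) i = cubeAddress n M w i + n ^ w.length * M j i := by
  simp [cubeAddress, Nat.ofDigits_append, Nat.ofDigits_singleton]

lemma wordMap_apply (hn : n ≠ 0) (hφ : ∀ j x, φ j x = (n : ℝ)⁻¹ • (x + fun i => (M j i : ℝ)))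
    (w : List ι) (x : Fin d → ℝ) (i : Fin d) :
    wordMap φ w x i = (x i + cubeAddress n M w i) / (n : ℝ) ^ w.length := by
  induction w with
  | nil => simp [cubeAddress]
  | cons j w ih =>
    simp only [wordMap_cons, Function.comp_apply, hφ, Pi.smul_apply, Pi.add_apply, ih,
      cubeAddress_cons, List.length_cons, smul_eq_mul]
    push_cast
    field_simp
    ring

lemma cubeAddress_injective (hn : 1 < n) (hM : Function.Injective M) (hMn : ∀ j i, M j i < n)
    {w w' : List ι} (hlen : w.length = w'.length) (h : cubeAddress n M w = cubeAddress n M w') :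
    w = w' := by
  have hdigits : ∀ (u : List ι) (i : Fin d), ∀ l ∈ (u.map fun j => M j i).reverse, l < n := by
    simp only [List.mem_reverse, List.mem_map]
    rintro u i _ ⟨j, -, rfl⟩
    exact hMn j i
  have hcoord : ∀ i, w.map (fun j => M j i) = w'.map (fun j => M j i) := fun i =>
    List.reverse_injective <| Nat.ofDigits_inj_of_len_eq hn (by simp [hlen])
      (hdigits w i) (hdigits w' i) (congrFun h i)
  refine List.map_injective_iff.2 hM <| List.ext_getElem (by simpa using hlen)
    fun p h₁ _ => funext fun i => ?_
  have := List.getElem_of_eq (hcoord i) (by simpa using h₁)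
  simp only [List.getElem_map] at this ⊢
  exact this

lemma isCompact_unitCube : IsCompact (unitCube d) := by
  have : unitCube d = univ.pi fun _ => Icc 0 1 := by
    ext
    simp only [unitCube, mem_ofPred_eq, mem_univ_pi]
  exact this ▸ isCompact_univ_pi fun _ => isCompact_Icc

lemma mapsTo_unitCube (hMn : ∀ j i, M j i < n)
    (hφ : ∀ j x, φ j x = (n : ℝ)⁻¹ • (x + fun i => (M j i : ℝ))) (j : ι) :
    MapsTo (φ j) (unitCube d) (unitCube d) := by
  intro x hx i
  have hn : (0 : ℝ) < n := by exact_mod_cast (Nat.zero_le _).trans_lt (hMn j i)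
  have hM : (M j i : ℝ) + 1 ≤ n := by exact_mod_cast hMn j i
  obtain ⟨hx0, hx1⟩ := hx i
  rw [hφ]
  simp only [Pi.smul_apply, Pi.add_apply, smul_eq_mul, mem_Icc]
  constructor
  · positivity
  · rw [inv_mul_le_iff₀ hn]
    linarith

lemma cubeAddress_mem_Icc (hn : n ≠ 0)
    (hφ : ∀ j x, φ j x = (n : ℝ)⁻¹ • (x + fun i => (M j i : ℝ))) {w : List ι}
    {e x : Fin d → ℝ} {ρ : ℝ} (he : e ∈ unitCube d) (hρ : (n : ℝ) ^ w.length * ρ ≤ 1)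
    (hex : wordMap φ w e ∈ closedBall x ρ) (i : Fin d) :
    (cubeAddress n M w i : ℤ) ∈
      Finset.Icc (⌊(n : ℝ) ^ w.length * x i⌋ - 2) (⌊(n : ℝ) ^ w.length * x i⌋ + 1) := by
  set q : ℝ := (n : ℝ) ^ w.length
  have hq : 0 < q := by positivity
  have hp := wordMap_apply hn hφ w e i
  have hdist : |wordMap φ w e i - x i| ≤ ρ := by
    rw [← Real.dist_eq]
    exact (dist_le_pi_dist _ _ i).trans (mem_closedBall.1 hex)
  obtain ⟨hlow, hhigh⟩ := abs_le.1 hdist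
  have ha : (cubeAddress n M w i : ℝ) = q * wordMap φ w e i - e i := by
    rw [hp]
    field_simp
    ring
  obtain ⟨he0, he1⟩ := he i
  -- the address is `q p_i - e_i` for `p = φ_w e`, where `e_i ∈ [0, 1]` and `|q p_i - q x_i| ≤ 1`
  have h₁ : q * x i - 2 ≤ cubeAddress n M w i := by nlinarith
  have h₂ : (cubeAddress n M w i : ℝ) ≤ q * x i + 1 := by nlinarith
  rw [Finset.mem_Icc]
  constructor
  · exact_mod_cast (sub_le_sub_right (Int.floor_le _) 2).trans h₁
  · have : (cubeAddress n M w i : ℤ) < ⌊q * x i⌋ + 2 := by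
      exact_mod_cast (by linarith [Int.lt_floor_add_one (q * x i)] :
        (cubeAddress n M w i : ℝ) < ⌊q * x i⌋ + 2)
    omega

open Classical in
lemma card_filter_wordMap_image_inter_closedBall_le [Fintype ι] (hn : 1 < n)
    (hM : Function.Injective M) (hMn : ∀ j i, M j i < n)
    (hφ : ∀ j x, φ j x = (n : ℝ)⁻¹ • (x + fun i => (M j i : ℝ))) {E : Set (Fin d → ℝ)}
    (hE : E ⊆ unitCube d) (x : Fin d → ℝ) {k : ℕ} {ρ : ℝ} (hρ : (n : ℝ) ^ k * ρ ≤ 1) :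
    #{v : Fin k → ι | (wordMap φ (List.ofFn v) '' E ∩ closedBall x ρ).Nonempty} ≤ 4 ^ d := by
  set c : Fin d → ℤ := fun i => ⌊(n : ℝ) ^ k * x i⌋
  calc #{v : Fin k → ι | (wordMap φ (List.ofFn v) '' E ∩ closedBall x ρ).Nonempty}
      ≤ #(Fintype.piFinset fun i => Finset.Icc (c i - 2) (c i + 1)) := by
        refine Finset.card_le_card_of_injOn (fun v i => (cubeAddress n M (List.ofFn v) i : ℤ))
          (fun v hv => ?_) (fun v _ v' _ h => ?_)
        · obtain ⟨-, ⟨_, ⟨e, he, rfl⟩, hex⟩⟩ := Finset.mem_filter.1 hv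
          refine Fintype.mem_piFinset.2 fun i => ?_
          simpa using cubeAddress_mem_Icc (by omega) hφ (hE he) (by simpa using hρ) hex i
        · refine List.ofFn_injective (cubeAddress_injective hn hM hMn (by simp) ?_)
          exact funext fun i => Int.ofNat_inj.1 (congrFun h i)
      _ = 4 ^ d := by simp [Int.card_Icc, show ∀ a : ℤ, a + 1 + 1 - (a - 2) = 4 by intro; ring]

lemma inv_pow_le_mul_rpow_log_div_log {N k : ℕ} {ρ : ℝ} (hn : 1 < n) (hN : 0 < N)
    (hρ : (n : ℝ)⁻¹ ^ (k + 1) < ρ) :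
    (N : ℝ)⁻¹ ^ k ≤ N * ρ ^ (Real.log N / Real.log n) := by
  have hs : 0 ≤ Real.log N / Real.log n :=
    div_nonneg (Real.log_natCast_nonneg N) (Real.log_natCast_nonneg n)
  calc (N : ℝ)⁻¹ ^ k = N * ((n : ℝ)⁻¹ ^ (k + 1)) ^ (Real.log N / Real.log n) := by
        rw [← Real.rpow_pow_comm (by positivity), Real.inv_rpow (by positivity),
          natCast_rpow_log_div_log hn hN, pow_succ]
        field_simp
    _ ≤ N * ρ ^ (Real.log N / Real.log n) := by gcongr

lemma map_codingMap_closedBall_le [Fintype ι] [Nonempty ι] [MeasurableSpace ι]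
    [MeasurableSingletonClass ι] (hn : 1 < n) (hM : Function.Injective M)
    (hMn : ∀ j i, M j i < n) (hφ : ∀ j x, φ j x = (n : ℝ)⁻¹ • (x + fun i => (M j i : ℝ)))
    {E : Set (Fin d → ℝ)} (hE : IsCompact E) (hEφ : ∀ j, MapsTo (φ j) E E)
    (hEcube : E ⊆ unitCube d) {x₀ : Fin d → ℝ} (hx₀ : x₀ ∈ E) (x : Fin d → ℝ) {ρ : ℝ}
    (hρ0 : 0 < ρ) (hρ1 : ρ ≤ 1) :
    (uniformBernoulli ι).map (codingMap φ x₀) (closedBall x ρ)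
      ≤ ((4 ^ d * Fintype.card ι : ℕ) : ℝ≥0) *
        ENNReal.ofReal (ρ ^ (Real.log (Fintype.card ι) / Real.log n)) := by
  classical
  have hφL : ∀ j, LipschitzWith (n : ℝ≥0)⁻¹ (φ j) := fun j => lipschitzWith_inv_smul_add _ (hφ j)
  have hr : (n : ℝ≥0)⁻¹ < 1 := inv_lt_one_of_one_lt₀ (by exact_mod_cast hn)
  obtain ⟨k, hk, hρk⟩ := exists_nat_pow_near_of_lt_one hρ0 hρ1 (by positivity : (0 : ℝ) < (n : ℝ)⁻¹)
    (inv_lt_one_of_one_lt₀ (by exact_mod_cast hn))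
  have hnρ : (n : ℝ) ^ k * ρ ≤ 1 := by
    calc (n : ℝ) ^ k * ρ ≤ (n : ℝ) ^ k * (n : ℝ)⁻¹ ^ k := by gcongr
      _ = 1 := by rw [← mul_pow, mul_inv_cancel₀ (by positivity), one_pow]
  set W : Finset (Fin k → ι) := {v | (wordMap φ (List.ofFn v) '' E ∩ closedBall x ρ).Nonempty}
  have hcover : codingMap φ x₀ ⁻¹' closedBall x ρ ⊆ ⋃ v ∈ W, prefixCylinder k v := by
    intro ω hω
    refine mem_iUnion₂.2 ⟨fun i => ω i, Finset.mem_filter.2 ⟨Finset.mem_univ _, ?_⟩, fun _ => rfl⟩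
    exact ⟨codingMap φ x₀ ω, codingMap_mem hφL hr hE hEφ hx₀ ω k, hω⟩
  calc (uniformBernoulli ι).map (codingMap φ x₀) (closedBall x ρ)
      = uniformBernoulli ι (codingMap φ x₀ ⁻¹' closedBall x ρ) :=
        Measure.map_apply (measurable_codingMap hφL hr hE.isBounded hEφ hx₀)
          measurableSet_closedBall
    _ ≤ ∑ v ∈ W, uniformBernoulli ι (prefixCylinder k v) :=
        (measure_mono hcover).trans (measure_biUnion_finset_le _ _)
    _ = #W * ENNReal.ofReal ((Fintype.card ι : ℝ)⁻¹ ^ k) := by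
        simp only [uniformBernoulli_prefixCylinder, Finset.sum_const, nsmul_eq_mul]
        rw [ENNReal.ofReal_pow (by positivity), ENNReal.ofReal_inv_of_pos (by positivity),
          ENNReal.ofReal_natCast]
    _ ≤ (4 ^ d : ℕ) * ENNReal.ofReal (Fintype.card ι *
          ρ ^ (Real.log (Fintype.card ι) / Real.log n)) := by
        gcongr
        · exact card_filter_wordMap_image_inter_closedBall_le hn hM hMn hφ hEcube x hnρ
        · exact inv_pow_le_mul_rpow_log_div_log hn Fintype.card_pos hk
    _ = _ := by
        rw [ENNReal.ofReal_mul (by positivity), ENNReal.ofReal_natCast, ← mul_assoc]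
        push_cast
        rfl

lemma ofReal_log_card_div_log_le_dimH_of_digits [Fintype ι] (hn : 1 < n) (hM : Function.Injective M)
    (hMn : ∀ j i, M j i < n) (hφ : ∀ j x, φ j x = (n : ℝ)⁻¹ • (x + fun i => (M j i : ℝ)))
    {E : Set (Fin d → ℝ)} (hEne : E.Nonempty) (hEc : IsCompact E) (hE : E = ⋃ j, φ j '' E) :
    ENNReal.ofReal (Real.log (Fintype.card ι) / Real.log n) ≤ dimH E := by
  let _ : MeasurableSpace ι := ⊤
  have : MeasurableSingletonClass ι := ⟨fun _ => MeasurableSpace.measurableSet_top⟩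
  obtain ⟨x₀, hx₀⟩ := hEne
  have : Nonempty ι := by
    obtain ⟨j, -⟩ := mem_iUnion.1 (hE.subset hx₀)
    exact ⟨j⟩
  have hφL : ∀ j, LipschitzWith (n : ℝ≥0)⁻¹ (φ j) := fun j => lipschitzWith_inv_smul_add _ (hφ j)
  have hr : (n : ℝ≥0)⁻¹ < 1 := inv_lt_one_of_one_lt₀ (by exact_mod_cast hn)
  have hEφ : ∀ j, MapsTo (φ j) E E := fun j x hx => hE ▸ mem_iUnion.2 ⟨j, x, hx, rfl⟩
  have hEcube : E ⊆ unitCube d := subset_of_forall_mapsTo hφL hr hE.subset hEc.isBounded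
    isCompact_unitCube ⟨0, fun i => by simp⟩ (mapsTo_unitCube hMn hφ)
  refine le_dimH_of_measure_closedBall_le (μ := (uniformBernoulli ι).map (codingMap φ x₀))
    (div_nonneg (Real.log_natCast_nonneg _) (Real.log_natCast_nonneg _))
    (fun x ρ hρ0 hρ1 => map_codingMap_closedBall_le hn hM hMn hφ hEc hEφ hEcube hx₀ x hρ0 hρ1) ?_
  have hpre : codingMap φ x₀ ⁻¹' E = univ :=
    eq_univ_of_forall fun ω => by simpa [prefixWord] using codingMap_mem hφL hr hEc hEφ hx₀ ω 0
  rw [Measure.map_apply (measurable_codingMap hφL hr hEc.isBounded hEφ hx₀) hEc.measurableSet,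
    hpre, measure_univ]
  exact one_ne_zero

theorem ofReal_log_card_div_log_le_dimH [Fintype ι] (hn : 1 < n) {D : ι → Fin d → ℝ}
    (hDinj : Function.Injective D) (hD : ∀ j i, ∃ m : ℕ, m < n ∧ D j i = m)
    (hφ : ∀ j x, φ j x = (n : ℝ)⁻¹ • (x + D j)) {E : Set (Fin d → ℝ)} (hEne : E.Nonempty)
    (hEc : IsCompact E) (hE : E = ⋃ j, φ j '' E) :
    ENNReal.ofReal (Real.log (Fintype.card ι) / Real.log n) ≤ dimH E := by
  choose M hMn hMD using hD
  have hM : Function.Injective M := fun j j' h => hDinj <| funext fun i => by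
    rw [hMD, hMD, h]
  have hφM : ∀ j x, φ j x = (n : ℝ)⁻¹ • (x + fun i => (M j i : ℝ)) := fun j x => by
    rw [hφ, show D j = fun i => (M j i : ℝ) from funext (hMD j)]
  exact ofReal_log_card_div_log_le_dimH_of_digits hn hM hMn hφM hEne hEc hE

end FractalCube

theorem dimension_drop_outside_island_points_general
    (d n N : ℕ) (hn : 2 ≤ n)
    (D : Fin N → (Fin d → ℝ)) (hDinj : Function.Injective D)
    (hD : ∀ j i, ∃ m : ℕ, m < n ∧ D j i = (m : ℝ))
    (φ : Fin N → (Fin d → ℝ) → (Fin d → ℝ))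
    (hφ : ∀ j x, φ j x = (n : ℝ)⁻¹ • (x + D j))
    (E : Set (Fin d → ℝ)) (hEne : E.Nonempty) (hEc : IsCompact E)
    (hE : E = ⋃ j, φ j '' E)
    -- `U = ⋃_{j ∈ J} φ_j([0,1]^d)` is an island of the first approximation `E₁`
    (J : Finset (Fin N)) (U : Set (Fin d → ℝ))
    (hU : U = ⋃ j ∈ J, φ j '' unitCube d)
    (hUcomp : ∃ x ∈ (⋃ j, φ j '' unitCube d),
      U = connectedComponentIn (⋃ j, φ j '' unitCube d) x)
    -- `P` is the set of points with a coding in which letters of `J` occur infinitely often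
    (P : Set (Fin d → ℝ))
    (hP : P = {x ∈ E | ∃ σ : ℕ → Fin N,
      (⋂ k : ℕ, ((List.ofFn (fun i : Fin k => σ i)).foldr
          (fun j f => φ j ∘ f) id) '' E) = {x} ∧
      ∀ m : ℕ, ∃ k ≥ m, σ k ∈ J})
    -- `E'` is the fractal cube with digit set `𝒟' = 𝒟 \ {d_j : j ∈ J}`
    (E' : Set (Fin d → ℝ)) (hE'ne : E'.Nonempty) (hE'c : IsCompact E')
    (hE' : E' = ⋃ j ∈ Jᶜ, φ j '' E') :
    E \ P ⊆ (⋃ σ : List (Fin N), (σ.foldr (fun j f => φ j ∘ f) id) '' E') ∧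
    dimH (E \ P) ≤ ENNReal.ofReal (Real.log (N - J.card) / Real.log n) ∧
    ENNReal.ofReal (Real.log (N - J.card) / Real.log n) < dimH E := by
  have hφL : ∀ j, LipschitzWith (n : ℝ≥0)⁻¹ (φ j) := fun j => lipschitzWith_inv_smul_add _ (hφ j)
  have hr : (n : ℝ≥0)⁻¹ < 1 := inv_lt_one_of_one_lt₀ (by exact_mod_cast hn)
  obtain ⟨x, hx, rfl⟩ := hUcomp
  obtain ⟨j, hj, -⟩ := mem_iUnion₂.1 (hU.subset (mem_connectedComponentIn hx))
  obtain ⟨j', hj', -⟩ := mem_iUnion₂.1 (hE'.subset hE'ne.some_mem)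
  have hcard : ((N : ℝ) - J.card) = (Jᶜ.card : ℕ) := by
    rw [Finset.card_compl, Fintype.card_fin, Nat.cast_sub (by simpa using J.card_le_univ)]
  have hsub : E \ P ⊆ ⋃ w : List (Fin N), wordMap φ w '' E' := fun x ⟨hxE, hxP⟩ =>
    mem_iUnion_wordMap_image_of_eventually_notMem hφL hr hE.subset hEc.isBounded hE'c hE'ne
      (J := J) (fun j hj y hy => hE' ▸ mem_iUnion₂.2 ⟨j, Finset.mem_compl.2 hj, y, hy, rfl⟩) hxE
      fun ω hω => by
        by_contra! h
        exact hxP (hP ▸ ⟨hxE, ω, hω, h⟩)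
  refine ⟨hsub, ?_, ?_⟩
  · calc dimH (E \ P) ≤ dimH (⋃ w : List (Fin N), wordMap φ w '' E') := dimH_mono hsub
      _ ≤ _ := dimH_iUnion_wordMap_image_le hφL (by simp; omega) hr hE'c.isBounded hE'.subset
      _ = _ := by simp [hcard, Real.log_inv]
  · calc ENNReal.ofReal (Real.log (N - J.card) / Real.log n)
        < ENNReal.ofReal (Real.log (Fintype.card (Fin N)) / Real.log n) := by
          rw [hcard]
          exact ofReal_log_div_log_lt hn (Finset.card_pos.2 ⟨j', hj'⟩)
            ((Finset.card_compl_lt_iff_nonempty J).2 ⟨j, hj⟩)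
      _ ≤ dimH E := ofReal_log_card_div_log_le_dimH hn hDinj hD hφ hEne hEc hE

theorem dimension_drop_outside_island_points
    (d n N : ℕ) (hn : 2 ≤ n)
    (D : Fin N → (Fin d → ℝ)) (hDinj : Function.Injective D)
    (hD : ∀ j i, ∃ m : ℕ, m < n ∧ D j i = (m : ℝ))
    (φ : Fin N → (Fin d → ℝ) → (Fin d → ℝ))
    (hφ : ∀ j x, φ j x = (n : ℝ)⁻¹ • (x + D j))
    (E : Set (Fin d → ℝ)) (hEne : E.Nonempty) (hEc : IsCompact E)
    (hE : E = ⋃ j, φ j '' E)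
    -- `U = ⋃_{j ∈ J} φ_j([0,1]^d)` is an island of the first approximation `E₁`
    (J : Finset (Fin N)) (U : Set (Fin d → ℝ))
    (hU : U = ⋃ j ∈ J, φ j '' unitCube d)
    (hUcomp : ∃ x ∈ (⋃ j, φ j '' unitCube d),
      U = connectedComponentIn (⋃ j, φ j '' unitCube d) x)
    (hUisland : U ∩ frontier (unitCube d) = ∅)
    -- `P` is the set of points with a coding in which letters of `J` occur infinitely often
    (P : Set (Fin d → ℝ))
    (hP : P = {x ∈ E | ∃ σ : ℕ → Fin N,
      (⋂ k : ℕ, ((List.ofFn (fun i : Fin k => σ i)).foldr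
          (fun j f => φ j ∘ f) id) '' E) = {x} ∧
      ∀ m : ℕ, ∃ k ≥ m, σ k ∈ J})
    -- `E'` is the fractal cube with digit set `𝒟' = 𝒟 \ {d_j : j ∈ J}`
    (E' : Set (Fin d → ℝ)) (hE'ne : E'.Nonempty) (hE'c : IsCompact E')
    (hE' : E' = ⋃ j ∈ Jᶜ, φ j '' E') :
    E \ P ⊆ (⋃ σ : List (Fin N), (σ.foldr (fun j f => φ j ∘ f) id) '' E') ∧
    dimH (E \ P) ≤ ENNReal.ofReal (Real.log (N - J.card) / Real.log n) ∧
    ENNReal.ofReal (Real.log (N - J.card) / Real.log n) < dimH E :=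
  dimension_drop_outside_island_points_general d n N hn D hDinj hD φ hφ E hEne hEc hE J U hU hUcomp
    P hP E' hE'ne hE'c hE'
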